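/- arXiv:2507.08830 — 5 statements merged into one kernel-verified Lean document; each statement's English description precedes it below -/
import Mathlib

section
/- Let p be a prime and let H be a nonempty multiset of positive integers, none of which is divisible by p, such that the product P of all elements of H satisfies P ≢ 1 (mod p). Suppose some heap h ∈ H satisfies h > p. Then there exists an integer r with 1 ≤ r < p and r < h such that p does not divide h − r and (∏ of (H with one copy of h removed)) · (h − r) ≡ 1 (mod p). -/
/-!
In `ZMod p` the heaps other than `h` have a nonzero product `q`, so a move to a losing
position must bring `h` to the residue `q⁻¹`. Subtracting from `h` the least nonnegative
representative `r` of `h - q⁻¹` does this; `r < p < h`, and `r ≠ 0` precisely because the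
position is winning.
-/

theorem Prime.not_dvd_multiset_prod {M₀ : Type*} [CommMonoidWithZero M₀] {p : M₀}
    (hp : Prime p) {s : Multiset M₀} (hs : ∀ a ∈ s, ¬ p ∣ a) : ¬ p ∣ s.prod :=
  fun hd =>
    let ⟨a, ha, hpa⟩ := hp.exists_mem_multiset_dvd hd
    hs a ha hpa

namespace ZMod

theorem natCast_sub_val {n h : ℕ} [NeZero n] (a : ZMod n) (ha : a.val ≤ h) :
    ((h - a.val : ℕ) : ZMod n) = h - a := by
  rw [Nat.cast_sub ha, natCast_zmod_val]

theorem exists_pos_lt_natCast_sub_eq {n h : ℕ} [NeZero n] (hh : n ≤ h) {t : ZMod n}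
    (ht : (h : ZMod n) ≠ t) : ∃ r, 0 < r ∧ r < n ∧ r < h ∧ ((h - r : ℕ) : ZMod n) = t := by
  set a : ZMod n := h - t
  have hlt : a.val < n := val_lt a
  refine ⟨a.val, ?_, hlt, hlt.trans_le hh, ?_⟩
  · exact Nat.pos_of_ne_zero fun h0 => ht (sub_eq_zero.mp ((val_eq_zero a).mp h0))
  · rw [natCast_sub_val a (hlt.trans_le hh).le, sub_sub_cancel]

end ZMod

theorem mum_winning_to_losing_general (p : ℕ) (hp : p.Prime) (H : Multiset ℕ)
    (hndvd : ∀ h ∈ H, ¬ p ∣ h)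
    (hwin : ¬ (H.prod ≡ 1 [MOD p]))
    (h : ℕ) (hmem : h ∈ H) (hbig : h > p) :
    ∃ r : ℕ, 1 ≤ r ∧ r < p ∧ r < h ∧ ¬ p ∣ (h - r) ∧
      (H.erase h).prod * (h - r) ≡ 1 [MOD p] := by
  have : Fact p.Prime := ⟨hp⟩
  set q := (H.erase h).prod
  have hq : (q : ZMod p) ≠ 0 := by
    rw [Ne, ZMod.natCast_eq_zero_iff]
    exact hp.prime.not_dvd_multiset_prod fun a ha => hndvd a (Multiset.mem_of_mem_erase ha)
  have hprod : (H.prod : ZMod p) = h * q := by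
    rw [← Multiset.prod_erase hmem, Nat.cast_mul]
  have hh : (h : ZMod p) ≠ (q : ZMod p)⁻¹ := fun heq => hwin <| by
    rw [← ZMod.natCast_eq_natCast_iff, hprod, heq, Nat.cast_one, inv_mul_cancel₀ hq]
  obtain ⟨r, hr0, hrp, hrh, hsub⟩ := ZMod.exists_pos_lt_natCast_sub_eq hbig.le hh
  refine ⟨r, hr0, hrp, hrh, ?_, ?_⟩
  · rw [← ZMod.natCast_eq_zero_iff, hsub]
    exact inv_ne_zero hq
  · rw [← ZMod.natCast_eq_natCast_iff, Nat.cast_mul, hsub, Nat.cast_one, mul_inv_cancel₀ hq]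

/-- MuM, Proposition "Winning to Losing": if a position (nonempty multiset of
positive heaps, none divisible by the prime `p`) has product `P ≢ 1 (mod p)`
and some heap `h > p`, then there is a legal move to a losing position. -/
theorem mum_winning_to_losing (p : ℕ) (hp : p.Prime) (H : Multiset ℕ)
    (hne : H ≠ 0) (hpos : ∀ h ∈ H, 0 < h) (hndvd : ∀ h ∈ H, ¬ p ∣ h)
    (hwin : ¬ (H.prod ≡ 1 [MOD p]))
    (h : ℕ) (hmem : h ∈ H) (hbig : h > p) :
    ∃ r : ℕ, 1 ≤ r ∧ r < p ∧ r < h ∧ ¬ p ∣ (h - r) ∧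
      (H.erase h).prod * (h - r) ≡ 1 [MOD p] :=
  mum_winning_to_losing_general p hp H hndvd hwin h hmem hbig
end

section
/- Let p be a prime and let H be a multiset of positive integers, none divisible by p, whose product satisfies ∏ H ≡ 1 (mod p). Then for every h ∈ H and every integer r with 1 ≤ r < p and r < h, the product after the move is not congruent to 1: (∏ of (H with one copy of h removed)) · (h − r) ≢ 1 (mod p). -/
/-!
If `q` is the product of the untouched heaps, a losing position gives `q * h ≡ 1`, so `q` is
invertible mod `p`; were the move to `h - r` also losing, `q * (h - r) ≡ 1` would force
`h - r ≡ h`, i.e. `p ∣ r`, which `0 < r < p` rules out.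
-/

namespace Nat.ModEq

theorem of_mul_left_modEq_one {n q a b : ℕ} (ha : q * a ≡ 1 [MOD n]) (hb : q * b ≡ 1 [MOD n]) :
    a ≡ b [MOD n] :=
  cancel_left_of_coprime ((coprime_of_mul_modEq_one a ha).symm) (ha.trans hb.symm)

theorem sub_not_modEq_self {n h r : ℕ} (hr0 : 0 < r) (hrn : r < n) (hrh : r ≤ h) :
    ¬ h - r ≡ h [MOD n] := by
  rw [modEq_iff_dvd' (Nat.sub_le h r), Nat.sub_sub_self hrh]
  exact Nat.not_dvd_of_pos_of_lt hr0 hrn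

end Nat.ModEq

theorem mum_losing_to_winning_general (p : ℕ) (H : Multiset ℕ)
    (hlose : H.prod ≡ 1 [MOD p]) :
    ∀ h ∈ H, ∀ r : ℕ, 1 ≤ r → r < p → r < h →
      ¬ ((H.erase h).prod * (h - r) ≡ 1 [MOD p]) := by
  intro h hh r hr1 hrp hrh hmove
  rw [← Multiset.prod_erase hh, mul_comm] at hlose
  exact Nat.ModEq.sub_not_modEq_self hr1 hrp hrh.le
    (Nat.ModEq.of_mul_left_modEq_one hlose hmove).symm

/-- MuM, Proposition "Losing to Winning": if the product of the heaps is
`≡ 1 (mod p)`, then every legal move leads to a position with product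
`≢ 1 (mod p)`. -/
theorem mum_losing_to_winning (p : ℕ) (hp : p.Prime) (H : Multiset ℕ)
    (hpos : ∀ h ∈ H, 0 < h) (hndvd : ∀ h ∈ H, ¬ p ∣ h)
    (hlose : H.prod ≡ 1 [MOD p]) :
    ∀ h ∈ H, ∀ r : ℕ, 1 ≤ r → r < p → r < h →
      ¬ ((H.erase h).prod * (h - r) ≡ 1 [MOD p]) :=
  mum_losing_to_winning_general p H hlose
end

section
/- Let p be a prime and let H be a nonempty multiset of positive integers, none divisible by p, such that ∏ H ≢ 1 (mod p), and let h ∈ H satisfy h > p. Then there is exactly one integer r with 1 ≤ r ≤ p − 1 such that (∏ of (H with one copy of h removed)) · (h − r) ≡ 1 (mod p), and for this r the move is legal, i.e. r < h and p ∤ (h − r). -/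
/-!
Modulo `p` the condition `A * (h - r) ≡ 1`, with `A` the product of the other heaps, says that
`r` is the residue `h - A⁻¹`. This residue is nonzero because the position is winning, so it has
exactly one representative in `[1, p - 1]`. Such an `r` is below `p < h`, and `p ∤ h - r` since
`h - r` is invertible modulo `p`.
-/

theorem ZMod.existsUnique_natCast_eq_of_ne_zero {p : ℕ} [NeZero p] {x : ZMod p} (hx : x ≠ 0) :
    ∃! r : ℕ, 1 ≤ r ∧ r ≤ p - 1 ∧ (r : ZMod p) = x := by
  have hp := NeZero.pos p
  refine ⟨x.val, ⟨?_, ?_, ZMod.natCast_zmod_val x⟩, ?_⟩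
  · exact Nat.one_le_iff_ne_zero.2 ((ZMod.val_ne_zero x).2 hx)
  · exact Nat.le_sub_one_of_lt (ZMod.val_lt x)
  · rintro r ⟨-, hr, rfl⟩
    exact (ZMod.val_cast_of_lt (by omega)).symm

namespace Nat

variable {p a b : ℕ}

theorem not_dvd_of_mul_modEq_one (hp : p ≠ 1) (h : a * b ≡ 1 [MOD p]) : ¬ p ∣ b := by
  intro hb
  have h01 : 0 ≡ 1 [MOD p] := (modEq_zero_iff_dvd.2 (dvd_mul_of_dvd_right hb a)).symm.trans h
  exact hp (Nat.dvd_one.1 (modEq_zero_iff_dvd.1 h01.symm))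

theorem mul_modEq_one_iff_natCast_eq_inv (hp : p.Prime) (ha : ¬ p ∣ a) :
    a * b ≡ 1 [MOD p] ↔ (b : ZMod p) = (a : ZMod p)⁻¹ := by
  have : Fact p.Prime := ⟨hp⟩
  have ha' : (a : ZMod p) ≠ 0 := by rwa [Ne, ZMod.natCast_eq_zero_iff]
  rw [← ZMod.natCast_eq_natCast_iff, Nat.cast_mul, Nat.cast_one, mul_eq_one_iff_inv_eq₀ ha', eq_comm]

theorem mul_sub_modEq_one_iff_natCast_eq (hp : p.Prime) (ha : ¬ p ∣ a) {r : ℕ} (hr : r ≤ b) :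
    a * (b - r) ≡ 1 [MOD p] ↔ (r : ZMod p) = b - (a : ZMod p)⁻¹ := by
  rw [mul_modEq_one_iff_natCast_eq_inv hp ha, Nat.cast_sub hr, sub_eq_iff_eq_add', eq_sub_iff_add_eq, eq_comm]

end Nat

theorem mum_unique_winning_move_general (p : ℕ) (hp : p.Prime) (H : Multiset ℕ)
    (hndvd : ∀ h ∈ H, ¬ p ∣ h)
    (hwin : ¬ (H.prod ≡ 1 [MOD p]))
    (h : ℕ) (hmem : h ∈ H) (hbig : h > p) :
    (∃! r : ℕ, 1 ≤ r ∧ r ≤ p - 1 ∧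
        (H.erase h).prod * (h - r) ≡ 1 [MOD p]) ∧
    (∀ r : ℕ, 1 ≤ r → r ≤ p - 1 →
        (H.erase h).prod * (h - r) ≡ 1 [MOD p] →
        r < h ∧ ¬ p ∣ (h - r)) := by
  have : Fact p.Prime := ⟨hp⟩
  set A := (H.erase h).prod
  have hA : ¬ p ∣ A := fun hdvd => by
    obtain ⟨a, ha, hpa⟩ := hp.prime.exists_mem_multiset_dvd hdvd
    exact hndvd a (Multiset.mem_of_mem_erase ha) hpa
  have htarget : (h : ZMod p) - (A : ZMod p)⁻¹ ≠ 0 := by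
    rw [sub_ne_zero, Ne, ← Nat.mul_modEq_one_iff_natCast_eq_inv hp hA, mul_comm,
      Multiset.prod_erase hmem]
    exact hwin
  refine ⟨?_, fun r _ hr hmod => ⟨by omega, Nat.not_dvd_of_mul_modEq_one hp.ne_one hmod⟩⟩
  refine (existsUnique_congr fun r => ?_).2 (ZMod.existsUnique_natCast_eq_of_ne_zero htarget)
  exact and_congr_right fun _ => and_congr_right fun hr =>
    Nat.mul_sub_modEq_one_iff_natCast_eq hp hA (by omega)

/-- MuM: from a winning position with a heap `h > p`, there is exactly one
reduction amount `r` with `1 ≤ r ≤ p - 1` making the new product `≡ 1 (mod p)`,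
and this unique `r` gives a legal move (`r < h` and `p ∤ (h - r)`). -/
theorem mum_unique_winning_move (p : ℕ) (hp : p.Prime) (H : Multiset ℕ)
    (hne : H ≠ 0) (hpos : ∀ h ∈ H, 0 < h) (hndvd : ∀ h ∈ H, ¬ p ∣ h)
    (hwin : ¬ (H.prod ≡ 1 [MOD p]))
    (h : ℕ) (hmem : h ∈ H) (hbig : h > p) :
    (∃! r : ℕ, 1 ≤ r ∧ r ≤ p - 1 ∧
        (H.erase h).prod * (h - r) ≡ 1 [MOD p]) ∧
    (∀ r : ℕ, 1 ≤ r → r ≤ p - 1 →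
        (H.erase h).prod * (h - r) ≡ 1 [MOD p] →
        r < h ∧ ¬ p ∣ (h - r)) :=
  mum_unique_winning_move_general p hp H hndvd hwin h hmem hbig
end

section
/- Let p be a prime and let Lose be any predicate on positive integers not divisible by p satisfying the recursion: for every such h, Lose(h) holds if and only if for every integer r with 1 ≤ r < p, r < h, and p ∤ (h − r), Lose(h − r) fails. Then for every positive integer h not divisible by p, Lose(h) holds if and only if h ≡ 1 (mod p). -/
/-!
By strong induction on `h`. A move `r` changes the residue of the heap by `r`, and `0 < r < p`,
so from a heap `≡ 1 [MOD p]` no move reaches another such heap. Conversely, from a heap with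
residue `m ∉ {0, 1}` the move `r = m - 1` reaches a heap `≡ 1 [MOD p]`, which is not divisible
by `p`.
-/

namespace Nat

theorem not_dvd_of_modEq_one {p n : ℕ} (hp : 1 < p) (hn : n ≡ 1 [MOD p]) : ¬ p ∣ n := by
  intro hdvd
  have h01 : 0 ≡ 1 [MOD p] := ((modEq_zero_iff_dvd.mpr hdvd).symm).trans hn
  exact hp.ne' (dvd_one.mp h01.dvd')

theorem not_sub_modEq_self {p h r : ℕ} (hr0 : 0 < r) (hrp : r < p) (hrh : r ≤ h) :
    ¬ h - r ≡ h [MOD p] := by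
  intro hmod
  have hdvd : p ∣ r := by
    simpa [Nat.sub_sub_self hrh] using (modEq_iff_dvd' (sub_le h r)).mp hmod
  exact absurd (le_of_dvd hr0 hdvd) (by omega)

theorem exists_sub_modEq_one {p h : ℕ} (hp : 0 < p) (hnd : ¬ p ∣ h) (hne : ¬ h ≡ 1 [MOD p]) :
    ∃ r, 0 < r ∧ r < p ∧ r < h ∧ h - r ≡ 1 [MOD p] := by
  have hm0 : h % p ≠ 0 := fun h0 => hnd (dvd_of_mod_eq_zero h0)
  have hmp : h % p < p := mod_lt h hp
  have hm1 : h % p ≠ 1 := fun h1 => hne (by rw [ModEq, h1, mod_eq_of_lt (by omega)])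
  have hmh : h % p ≤ h := mod_le h p
  refine ⟨h % p - 1, by omega, by omega, by omega, ?_⟩
  have hdecomp : h - (h % p - 1) = 1 + p * (h / p) := by
    have := mod_add_div h p
    omega
  rw [hdecomp]
  exact add_mul_mod_self_left 1 p (h / p)

end Nat

/-- Single-heap MuM with prime modulus `p`: if `Lose` satisfies the P-position
recursion (a position is losing iff every legal move leads to a non-losing
position), then a heap `h` (with `0 < h`, `p ∤ h`) is losing iff `h ≡ 1 (mod p)`. -/
theorem mum_single_heap_p_positions (p : ℕ) (hp : p.Prime) (Lose : ℕ → Prop)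
    (hLose : ∀ h : ℕ, 0 < h → ¬ p ∣ h →
      (Lose h ↔ ∀ r : ℕ, 1 ≤ r → r < p → r < h → ¬ p ∣ (h - r) → ¬ Lose (h - r))) :
    ∀ h : ℕ, 0 < h → ¬ p ∣ h → (Lose h ↔ h ≡ 1 [MOD p]) := by
  intro h
  induction h using Nat.strong_induction_on with
  | _ h ih =>
    intro hpos hnd
    have ih' : ∀ r, 0 < r → r < h → ¬ p ∣ h - r → (Lose (h - r) ↔ h - r ≡ 1 [MOD p]) :=
      fun r hr0 hrh => ih (h - r) (by omega) (by omega)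
    rw [hLose h hpos hnd]
    constructor
    · intro hall
      by_contra hne
      obtain ⟨r, hr0, hrp, hrh, hmod⟩ := Nat.exists_sub_modEq_one hp.pos hnd hne
      have hnd' := Nat.not_dvd_of_modEq_one hp.one_lt hmod
      exact hall r hr0 hrp hrh hnd' ((ih' r hr0 hrh hnd').mpr hmod)
    · intro hmod r hr0 hrp hrh hnd' hL
      exact Nat.not_sub_modEq_self hr0 hrp hrh.le (((ih' r hr0 hrh hnd').mp hL).trans hmod.symm)
end

section
/- Let p be a prime, let t ≥ 1, and let h₁, …, h_t be positive integers none divisible by p, with product P = ∏ h_i. Fix an index i, set α = ∏_{j ≠ i} h_j, and suppose each option value is given by the induction hypothesis, i.e. the option obtained by subtracting r (1 ≤ r ≤ p − 1) from h_i has value (h_i − r)·α in ZMod p. Then the set of option values {(h_i − r)·α mod p : 1 ≤ r ≤ p − 1} equals {0, 1, …, p − 1} \ {P mod p}, and consequently the least residue in {0, 1, …, p − 1} not attained as an option value is P mod p. -/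
/-!
The nonzero residues mod `p` are exactly the casts of `1, …, p - 1`, and since `α` is a unit the
affine map `y ↦ (h i - y) * α` is a bijection of `ZMod p`; it therefore carries the nonzero
residues onto everything except the image of `0`, which is `h i * α = P`. The least natural number
whose residue is missed is then the least `n ≡ P [MOD p]`, namely `P % p`.
-/

theorem Nat.sInf_setOf_modEq (p m : ℕ) : sInf {n : ℕ | n ≡ m [MOD p]} = m % p :=
  le_antisymm (Nat.sInf_le (Nat.mod_modEq m p))
    (le_csInf ⟨m, Nat.ModEq.refl m⟩ fun n hn => hn.symm ▸ Nat.mod_le n p)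

theorem ZMod.natCast_image_Icc_one_pred (p : ℕ) [NeZero p] :
    (Nat.cast : ℕ → ZMod p) '' Set.Icc 1 (p - 1) = {0}ᶜ := by
  ext x
  constructor
  · rintro ⟨r, ⟨hr1, hrp⟩, rfl⟩
    rw [Set.mem_compl_singleton_iff, ne_eq, ZMod.natCast_eq_zero_iff]
    exact Nat.not_dvd_of_pos_of_lt hr1 (by have := NeZero.pos p; omega)
  · intro hx
    refine ⟨x.val, ⟨Nat.one_le_iff_ne_zero.2 ((ZMod.val_ne_zero x).2 hx), ?_⟩,
      ZMod.natCast_zmod_val x⟩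
    have := ZMod.val_lt x
    omega

theorem image_sub_mul_compl_zero {K : Type*} [DivisionRing K] (a : K) {α : K} (hα : α ≠ 0) :
    (fun y => (a - y) * α) '' {0}ᶜ = {a * α}ᶜ := by
  have hbij : Function.Bijective fun y : K => (a - y) * α :=
    ((Equiv.subLeft a).trans (Equiv.mulRight₀ α hα)).bijective
  rw [Set.image_compl_eq hbij, Set.image_singleton, sub_zero]

theorem ZMod.setOf_sub_natCast_mul (p : ℕ) [Fact p.Prime] (a : ZMod p) {α : ZMod p}
    (hα : α ≠ 0) :
    {x : ZMod p | ∃ r : ℕ, 1 ≤ r ∧ r ≤ p - 1 ∧ x = (a - r) * α} = {x | x ≠ a * α} := by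
  have := image_sub_mul_compl_zero a hα
  rw [← ZMod.natCast_image_Icc_one_pred, Set.image_image] at this
  rw [← Set.compl_singleton_eq, ← this]
  ext x
  simp only [Set.mem_ofPred_eq, Set.mem_image, Set.mem_Icc, and_assoc, eq_comm]

theorem mum_induction_step_general (p : ℕ) (hp : p.Prime) (t : ℕ)
    (h : Fin t → ℕ) (hndvd : ∀ j, ¬ p ∣ h j)
    (i : Fin t) (P : ℕ) (hP : P = ∏ j : Fin t, h j)
    (α : ZMod p) (hα : α = ∏ j ∈ Finset.univ.erase i, (h j : ZMod p)) :
    {x : ZMod p | ∃ r : ℕ, 1 ≤ r ∧ r ≤ p - 1 ∧ x = ((h i : ZMod p) - r) * α} =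
      {x : ZMod p | x ≠ (P : ZMod p)} ∧
    sInf {n : ℕ | ∀ r : ℕ, 1 ≤ r → r ≤ p - 1 →
        ((h i : ZMod p) - r) * α ≠ (n : ZMod p)} = P % p := by
  have := Fact.mk hp
  have hα0 : α ≠ 0 := hα ▸ Finset.prod_ne_zero_iff.2 fun j _ =>
    (ZMod.natCast_eq_zero_iff (h j) p).not.2 (hndvd j)
  have hPα : (P : ZMod p) = h i * α := by
    rw [hP, hα, Nat.cast_prod, ← Finset.mul_prod_erase _ _ (Finset.mem_univ i)]
  have hoptions := hPα ▸ ZMod.setOf_sub_natCast_mul p (h i) hα0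
  refine ⟨hoptions, ?_⟩
  have hmex : {n : ℕ | ∀ r : ℕ, 1 ≤ r → r ≤ p - 1 →
      ((h i : ZMod p) - r) * α ≠ (n : ZMod p)} = {n | n ≡ P [MOD p]} := by
    ext n
    have := Set.ext_iff.1 hoptions n
    simp only [Set.mem_ofPred_eq, ← ZMod.natCast_eq_natCast_iff] at this ⊢
    grind
  rw [hmex, Nat.sInf_setOf_modEq]

/-- Induction step of the MuM Grundy-Mex theorem: with `α` the product of the
other heaps mod `p` and `P` the full product, the option values
`(h i - r) * α` for `1 ≤ r ≤ p - 1` attain exactly the residues other than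
`P mod p`, so the least unattained residue is `P % p`. -/
theorem mum_induction_step (p : ℕ) (hp : p.Prime) (t : ℕ) (ht : 1 ≤ t)
    (h : Fin t → ℕ) (hpos : ∀ j, 0 < h j) (hndvd : ∀ j, ¬ p ∣ h j)
    (i : Fin t) (P : ℕ) (hP : P = ∏ j : Fin t, h j)
    (α : ZMod p) (hα : α = ∏ j ∈ Finset.univ.erase i, (h j : ZMod p)) :
    {x : ZMod p | ∃ r : ℕ, 1 ≤ r ∧ r ≤ p - 1 ∧ x = ((h i : ZMod p) - r) * α} =
      {x : ZMod p | x ≠ (P : ZMod p)} ∧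
    sInf {n : ℕ | ∀ r : ℕ, 1 ≤ r → r ≤ p - 1 →
        ((h i : ZMod p) - r) * α ≠ (n : ZMod p)} = P % p :=
  mum_induction_step_general p hp t h hndvd i P hP α hα
end
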